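/- (Holley-type criterion) Let {X_i : i ∈ V} be {0,1}-valued random variables with joint law μ on Ω = {0,1}^V, V finite. Suppose there is a total order < on V such that for every i ∈ V and all disjoint Y, Y' ⊆ {j ∈ V : j < i}, whenever P(⋀_{j∈Y}(X_j = 1) ∧ ⋀_{j∈Y'}(X_j = 0)) > 0, we have P(X_i = 1 | ⋀_{j∈Y}(X_j=1) ∧ ⋀_{j∈Y'}(X_j=0)) ≥ η. Then μ stochastically dominates the product Bernoulli measure π_η^V on Ω. -/

import Mathlib

open Finset

open Classical in
/-- Probability of the event `P` under the (finitely supported) measure `μ`. -/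
noncomputable def Pr {Ω : Type*} [Fintype Ω] (μ : Ω → ℝ) (P : Ω → Prop) : ℝ :=
  ∑ ω : Ω, if P ω then μ ω else 0

/-- The product Bernoulli measure `π_η` on `{0,1}^V`. -/
noncomputable def bernoulliProd {V : Type*} [Fintype V] (η : ℝ) (ω : V → Bool) : ℝ :=
  ∏ i : V, if ω i then η else 1 - η

/-!
Resample one coordinate at a time. Let `resample η a f` average `f` over an independent
Bernoulli(η) value of the coordinate `a`. This does not change the `π_η`-expectation. It can only
lower the `μ`-expectation when `f` is increasing and depends only on the coordinates `≤ a`: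
`f - resample η a f = (1[ω a] - η) * (f (ω with a ↦ 1) - f (ω with a ↦ 0))`, the second factor is
a nonnegative function of the coordinates below `a`, and given those coordinates `ω a = 1` has
`μ`-probability at least `η`. Resampling from the largest coordinate downwards turns `f` into the
constant `E_{π_η} f` without ever raising its `μ`-expectation.
-/

open Function

section Pr

variable {Ω : Type*} [Fintype Ω]

lemma Pr_nonneg {μ : Ω → ℝ} (hμ : ∀ ω, 0 ≤ μ ω) (P : Ω → Prop) : 0 ≤ Pr μ P :=
  sum_nonneg fun ω _ => by split_ifs <;> simp [hμ ω]

lemma Pr_congr (μ : Ω → ℝ) {P Q : Ω → Prop} (h : ∀ ω, P ω ↔ Q ω) : Pr μ P = Pr μ Q :=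
  congrArg (Pr μ) (funext fun ω => propext (h ω))

lemma Pr_ite_eq_Pr_and (μ : Ω → ℝ) (Q P : Ω → Prop) [DecidablePred Q] :
    Pr (fun ω => if Q ω then μ ω else 0) P = Pr μ (fun ω => Q ω ∧ P ω) :=
  sum_congr rfl fun ω _ => by split_ifs <;> simp_all

lemma sum_filter_mul_eq_mul_Pr (μ D : Ω → ℝ) {P : Ω → Prop} [DecidablePred P] {d : ℝ}
    (hD : ∀ ω, P ω → D ω = d) : ∑ ω ∈ univ.filter P, μ ω * D ω = d * Pr μ P := by
  rw [Pr, mul_sum, sum_filter]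
  refine sum_congr rfl fun ω _ => ?_
  split_ifs with h
  · rw [hD ω h, mul_comm]
  · simp

end Pr

section Resample

variable {V : Type*} [DecidableEq V]

noncomputable def resample (η : ℝ) (a : V) (f : (V → Bool) → ℝ) (ω : V → Bool) : ℝ :=
  η * f (update ω a true) + (1 - η) * f (update ω a false)

lemma monotone_resample {η : ℝ} (hη0 : 0 ≤ η) (hη1 : η ≤ 1) (a : V) {f : (V → Bool) → ℝ}
    (hf : Monotone f) : Monotone (resample η a f) := by
  intro x y hxy
  have hupd : ∀ b, update x a b ≤ update y a b := fun b =>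
    update_le_update_iff.2 ⟨le_rfl, fun j _ => hxy j⟩
  exact add_le_add (mul_le_mul_of_nonneg_left (hf (hupd true)) hη0)
    (mul_le_mul_of_nonneg_left (hf (hupd false)) (sub_nonneg.2 hη1))

lemma DependsOn.resample {η : ℝ} {a : V} {s : Finset V} {f : (V → Bool) → ℝ}
    (hf : DependsOn f s) : DependsOn (resample η a f) ↑(s.erase a) := fun x y hxy => by
  simp only [_root_.resample, hf.update a true hxy, hf.update a false hxy]

lemma sub_resample (η : ℝ) (a : V) (f : (V → Bool) → ℝ) (ω : V → Bool) :
    f ω - resample η a f ω =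
      (if ω a then 1 - η else -η) * (f (update ω a true) - f (update ω a false)) := by
  conv_lhs => rw [← update_eq_self a ω]
  cases ω a <;> simp [resample] <;> ring

end Resample

section Bernoulli

variable {V : Type*} [Fintype V] [DecidableEq V]

lemma sum_bernoulliProd (η : ℝ) : ∑ ω : V → Bool, bernoulliProd η ω = 1 := by
  simp only [bernoulliProd]
  rw [← Fintype.prod_sum fun (_ : V) (b : Bool) => if b then η else 1 - η]
  simp

lemma sum_bernoulliProd_mul_resample (η : ℝ) (a : V) (f : (V → Bool) → ℝ) :
    ∑ ω, bernoulliProd η ω * resample η a f ω = ∑ ω, bernoulliProd η ω * f ω := by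
  set ρ : (V → Bool) → ℝ := fun ω => ∏ j ∈ univ.erase a, if ω j then η else 1 - η
  have hπ : ∀ ω, bernoulliProd η ω = (if ω a then η else 1 - η) * ρ ω := fun ω =>
    (mul_prod_erase univ _ (mem_univ a)).symm
  have hρ : ∀ ω b, ρ (update ω a b) = ρ ω := fun ω b =>
    prod_congr rfl fun j hj => by rw [update_of_ne (ne_of_mem_erase hj)]
  rw [← sub_eq_zero, ← sum_sub_distrib]
  -- Flipping `ω` at `a` fixes `ρ` and `resample η a f`, so the two terms of each pair cancel.
  refine sum_ninvolution (fun ω => update ω a (!ω a)) (fun ω => ?_) (fun ω _ h => ?_)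
    (fun _ => mem_univ _) (fun ω => by simp)
  · simp only [← mul_sub, hπ, hρ]
    obtain ⟨ω, b, rfl⟩ : ∃ ω' b, ω = update ω' a b := ⟨ω, ω a, (update_eq_self a ω).symm⟩
    cases b <;> simp [resample, hρ] <;> ring
  · simpa using congrFun h a

end Bernoulli

section Holley

variable {V : Type*} [Fintype V] [LinearOrder V]

def CondProbAtLeast (μ : (V → Bool) → ℝ) (η : ℝ) (i : V) : Prop :=
  ∀ Y Y' : Finset V, Disjoint Y Y' → (∀ j ∈ Y, j < i) → (∀ j ∈ Y', j < i) →
    0 < Pr μ (fun ω => (∀ j ∈ Y, ω j = true) ∧ (∀ j ∈ Y', ω j = false)) →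
    η * Pr μ (fun ω => (∀ j ∈ Y, ω j = true) ∧ (∀ j ∈ Y', ω j = false)) ≤
      Pr μ (fun ω => ω i = true ∧ (∀ j ∈ Y, ω j = true) ∧ (∀ j ∈ Y', ω j = false))

variable {μ : (V → Bool) → ℝ} {η : ℝ} {a : V}

lemma CondProbAtLeast.mul_Pr_le (hμ : ∀ ω, 0 ≤ μ ω) (h : CondProbAtLeast μ η a)
    {Y Y' : Finset V} (hYY' : Disjoint Y Y') (hY : ∀ j ∈ Y, j < a) (hY' : ∀ j ∈ Y', j < a) :
    η * Pr μ (fun ω => (∀ j ∈ Y, ω j = true) ∧ (∀ j ∈ Y', ω j = false)) ≤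
      Pr μ (fun ω => ω a = true ∧ (∀ j ∈ Y, ω j = true) ∧ (∀ j ∈ Y', ω j = false)) := by
  rcases (Pr_nonneg hμ _).eq_or_lt with h0 | hpos
  · rw [← h0, mul_zero]
    exact Pr_nonneg hμ _
  · exact h Y Y' hYY' hY hY' hpos

lemma CondProbAtLeast.mul_sum_le (hμ : ∀ ω, 0 ≤ μ ω) (h : CondProbAtLeast μ η a)
    {D : (V → Bool) → ℝ} (hD : ∀ ω, 0 ≤ D ω) (hdep : DependsOn D (Set.Iio a)) :
    η * ∑ ω, μ ω * D ω ≤ ∑ ω, (if ω a then μ ω else 0) * D ω := by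
  -- Each fiber of `trace` is a cylinder event of the hypothesis, and `D` is constant on it.
  set past := univ.filter (· < a)
  set trace : (V → Bool) → Finset V := fun ω => past.filter (ω · = true)
  have htrace : ∀ ω ∈ univ, trace ω ∈ past.powerset := fun ω _ =>
    mem_powerset.2 (filter_subset _ _)
  rw [← sum_fiberwise_of_maps_to htrace, ← sum_fiberwise_of_maps_to htrace, mul_sum]
  refine sum_le_sum fun Y hY => ?_
  have hY : Y ⊆ past := mem_powerset.1 hY
  have hfiber : ∀ ω, trace ω = Y ↔ (∀ j ∈ Y, ω j = true) ∧ (∀ j ∈ past \ Y, ω j = false) := by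
    intro ω
    simp only [trace, Finset.ext_iff, mem_filter, mem_sdiff]
    grind
  have hD_fiber : ∀ ω, trace ω = Y → D ω = D (fun j => decide (j ∈ Y)) := by
    rintro ω rfl
    refine hdep fun j hj => ?_
    simp [trace, past, Set.mem_Iio.1 hj]
  rw [sum_filter_mul_eq_mul_Pr _ _ hD_fiber, sum_filter_mul_eq_mul_Pr _ _ hD_fiber,
    Pr_ite_eq_Pr_and, Pr_congr μ hfiber, Pr_congr μ fun ω => and_congr_right fun _ => hfiber ω,
    mul_left_comm]
  refine mul_le_mul_of_nonneg_left (h.mul_Pr_le hμ disjoint_sdiff ?_ ?_) (hD _)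
  · exact fun j hj => (mem_filter.1 (hY hj)).2
  · exact fun j hj => (mem_filter.1 (mem_sdiff.1 hj).1).2

lemma CondProbAtLeast.sum_mul_resample_le (hμ : ∀ ω, 0 ≤ μ ω) (h : CondProbAtLeast μ η a)
    {f : (V → Bool) → ℝ} (hf : Monotone f) {s : Finset V} (hs : ∀ j ∈ s, j < a)
    (hdep : DependsOn f ↑(insert a s)) :
    ∑ ω, μ ω * resample η a f ω ≤ ∑ ω, μ ω * f ω := by
  set D : (V → Bool) → ℝ := fun ω => f (update ω a true) - f (update ω a false)
  have hD : ∀ ω, 0 ≤ D ω := fun ω =>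
    sub_nonneg.2 (hf (update_le_update_iff'.2 (Bool.false_le true)))
  have hDdep : DependsOn D (Set.Iio a) := by
    refine DependsOn.mono (fun j hj => ?_) fun x y hxy =>
      congrArg₂ (· - ·) (hdep.update a true hxy) (hdep.update a false hxy)
    obtain ⟨hja, hj⟩ := mem_erase.1 hj
    exact hs j ((mem_insert.1 hj).resolve_left hja)
  have hgap : ∑ ω, μ ω * f ω - ∑ ω, μ ω * resample η a f ω =
      ∑ ω, (if ω a then μ ω else 0) * D ω - η * ∑ ω, μ ω * D ω := by
    rw [← sum_sub_distrib, mul_sum, ← sum_sub_distrib]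
    refine sum_congr rfl fun ω _ => ?_
    rw [← mul_sub, sub_resample]
    split_ifs <;> ring
  linarith [h.mul_sum_le hμ hD hDdep]

theorem sum_bernoulliProd_mul_le_of_dependsOn (hμ : ∀ ω, 0 ≤ μ ω) (hμ1 : ∑ ω, μ ω = 1)
    (hη0 : 0 ≤ η) (hη1 : η ≤ 1) (h : ∀ i, CondProbAtLeast μ η i) (s : Finset V)
    {f : (V → Bool) → ℝ} (hf : Monotone f) (hdep : DependsOn f s) :
    ∑ ω, bernoulliProd η ω * f ω ≤ ∑ ω, μ ω * f ω := by
  induction s using Finset.induction_on_max generalizing f with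
  | empty =>
    rw [coe_empty] at hdep
    have hconst (ν : (V → Bool) → ℝ) : ∑ ω, ν ω * f ω = (∑ ω, ν ω) * f default :=
      sum_mul univ ν _ ▸ sum_congr rfl fun ω _ => by rw [hdep.empty ω default]
    rw [hconst, hconst, sum_bernoulliProd, hμ1]
  | insert a s hs ih =>
    have has : a ∉ s := fun ha => lt_irrefl a (hs a ha)
    calc ∑ ω, bernoulliProd η ω * f ω = ∑ ω, bernoulliProd η ω * resample η a f ω :=
          (sum_bernoulliProd_mul_resample η a f).symm
      _ ≤ ∑ ω, μ ω * resample η a f ω :=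
          ih (monotone_resample hη0 hη1 a hf) (erase_insert has ▸ hdep.resample)
      _ ≤ ∑ ω, μ ω * f ω := (h a).sum_mul_resample_le hμ hf hs hdep

end Holley

/-- Holley-type criterion: if there is a total order on `V` such that for every
`i` and all disjoint `Y, Y' ⊆ {j : j < i}` with positive-probability
conditioning event, `P(X_i = 1 | ⋀_{j∈Y}(X_j=1) ∧ ⋀_{j∈Y'}(X_j=0)) ≥ η`, then
`μ` stochastically dominates the product Bernoulli measure `π_η`. -/
theorem stochDom_of_holley {V : Type*} [Fintype V] [LinearOrder V]
    (μ : (V → Bool) → ℝ) (hpos : ∀ ω, 0 ≤ μ ω) (hsum : ∑ ω, μ ω = 1)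
    (η : ℝ) (hη0 : 0 ≤ η) (hη1 : η ≤ 1)
    (hyp : ∀ i : V, ∀ Y Y' : Finset V, Disjoint Y Y' →
      (∀ j ∈ Y, j < i) → (∀ j ∈ Y', j < i) →
      0 < Pr μ (fun ω => (∀ j ∈ Y, ω j = true) ∧ (∀ j ∈ Y', ω j = false)) →
      η * Pr μ (fun ω => (∀ j ∈ Y, ω j = true) ∧ (∀ j ∈ Y', ω j = false)) ≤
        Pr μ (fun ω => ω i = true ∧ (∀ j ∈ Y, ω j = true) ∧ (∀ j ∈ Y', ω j = false)))
    (f : (V → Bool) → ℝ) (hf : Monotone f) :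
    ∑ ω, bernoulliProd η ω * f ω ≤ ∑ ω, μ ω * f ω :=
  sum_bernoulliProd_mul_le_of_dependsOn hpos hsum hη0 hη1 hyp univ hf
    (coe_univ (α := V) ▸ dependsOn_univ f)
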